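/- arXiv:1502.05454 — 2 statements merged into one kernel-verified Lean document; each statement's English description precedes it below -/
import Mathlib

section
/- Let H be a complex Hilbert space and let A and B be bounded self-adjoint operators on H. Then the Hausdorff distance between their spectra satisfies d_H(σ(A), σ(B)) ≤ ‖A − B‖. -/
/-! For a normal element `a` of a C⋆-algebra the functional calculus gives
`‖(z - a)⁻¹‖ ≤ 1 / dist(z, σ(a))`. So if `dist(z, σ(a)) > ‖a - b‖`, then
`z - b = (z - a) (1 - (z - a)⁻¹ (a - b))` is invertible by a Neumann series: every point of
`σ(b)` lies within `‖a - b‖` of `σ(a)`, and symmetrically. -/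

open Metric

namespace spectrum

variable {𝕜 A : Type*} [NormedField 𝕜] [NormedRing A] [NormedAlgebra 𝕜 A] [CompleteSpace A]

theorem notMem_of_norm_sub_mul_norm_resolvent_lt {a b : A} {z : 𝕜}
    (hz : z ∉ spectrum 𝕜 a) (h : ‖a - b‖ * ‖resolvent a z‖ < 1) : z ∉ spectrum 𝕜 b := by
  rw [notMem_iff] at hz ⊢
  nontriviality A
  set u := hz.unit
  have hu : ‖(↑u⁻¹ : A)‖ = ‖resolvent a z‖ := by rw [resolvent_eq hz]
  have hnear : ‖(algebraMap 𝕜 A z - b) - u‖ < ‖(↑u⁻¹ : A)‖⁻¹ := by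
    rw [IsUnit.unit_spec, sub_sub_sub_cancel_left, hu,
      ← one_div, lt_div_iff₀ (hu ▸ Units.norm_pos u⁻¹)]
    exact h
  exact (u.ofNearby _ hnear).isUnit

end spectrum

section CStarAlgebra

variable {A : Type*} [CStarAlgebra A]

lemma resolvent_eq_cfc (a : A) [IsStarNormal a] {z : ℂ} (hz : z ∉ spectrum ℂ a) :
    resolvent a z = cfc (fun t ↦ (z - t)⁻¹) a := by
  have hne : ∀ t ∈ spectrum ℂ a, z - t ≠ 0 := fun t ht h ↦ hz (sub_eq_zero.mp h ▸ ht)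
  rw [cfc_inv (fun t ↦ z - t) a hne, cfc_sub .., cfc_const z a, cfc_id' ℂ a]
  rfl

lemma norm_resolvent_le_inv_infDist (a : A) [IsStarNormal a] (z : ℂ) :
    ‖resolvent a z‖ ≤ (infDist z (spectrum ℂ a))⁻¹ := by
  by_cases hz : z ∈ spectrum ℂ a
  · rw [resolvent, Ring.inverse_non_unit _ hz, norm_zero]
    exact inv_nonneg.mpr infDist_nonneg
  rw [resolvent_eq_cfc a hz]
  refine norm_cfc_le (inv_nonneg.mpr infDist_nonneg) fun t ht ↦ ?_
  have hd : 0 < infDist z (spectrum ℂ a) :=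
    ((spectrum.isClosed a).notMem_iff_infDist_pos ⟨t, ht⟩).mp hz
  rw [norm_inv, ← dist_eq_norm]
  exact inv_anti₀ hd (infDist_le_dist_of_mem ht)

lemma infDist_spectrum_le_norm_sub_of_mem_spectrum (a b : A) [IsStarNormal a] {z : ℂ}
    (hz : z ∈ spectrum ℂ b) : infDist z (spectrum ℂ a) ≤ ‖a - b‖ := by
  by_contra! hlt
  have hd : 0 < infDist z (spectrum ℂ a) := (norm_nonneg _).trans_lt hlt
  have hza : z ∉ spectrum ℂ a := fun h ↦ hd.ne' (infDist_zero_of_mem h)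
  refine spectrum.notMem_of_norm_sub_mul_norm_resolvent_lt hza ?_ hz
  calc ‖a - b‖ * ‖resolvent a z‖ ≤ ‖a - b‖ * (infDist z (spectrum ℂ a))⁻¹ := by
        gcongr
        exact norm_resolvent_le_inv_infDist a z
    _ < 1 := by rwa [mul_inv_lt_iff₀ hd, one_mul]

theorem hausdorffDist_spectrum_le_norm_sub (a b : A) [IsStarNormal a] [IsStarNormal b] :
    hausdorffDist (spectrum ℂ a) (spectrum ℂ b) ≤ ‖a - b‖ :=
  hausdorffDist_le_of_infDist (norm_nonneg _)
    (fun _ hz ↦ norm_sub_rev a b ▸ infDist_spectrum_le_norm_sub_of_mem_spectrum b a hz)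
    (fun _ hz ↦ infDist_spectrum_le_norm_sub_of_mem_spectrum a b hz)

end CStarAlgebra

/-- If `A` and `B` are bounded self-adjoint operators on a complex
Hilbert space, then the Hausdorff distance between their spectra is at most `‖A - B‖`. -/
theorem hausdorffDist_spectrum_le_of_selfAdjoint
    {H : Type*} [NormedAddCommGroup H] [InnerProductSpace ℂ H] [CompleteSpace H]
    (A B : H →L[ℂ] H) (hA : IsSelfAdjoint A) (hB : IsSelfAdjoint B) :
    Metric.hausdorffDist (spectrum ℂ A) (spectrum ℂ B) ≤ ‖A - B‖ := by
  have := hA.isStarNormal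
  have := hB.isStarNormal
  exact hausdorffDist_spectrum_le_norm_sub A B
end

section
/- Let T > 0, let V : ℝ → ℝ be T-periodic and locally square-integrable, let Q = ‖V‖_B, and suppose Δ_V, viewed as an entire function of z, satisfies the bound |Δ_V(μ²)| ≤ C₀ exp( C₀ Q^{1/2} + T |Im μ| ) for all μ ∈ ℂ and some constant C₀ ≥ 1 in the case T = π. Then there is a constant C > 0 depending only on C₀ such that, for T = π, |Δ_V′(z)| ≤ (C / (1 + |z|^{1/2})) · exp( C Q^{1/2} + π |Im √z| ) for all z ∈ ℂ, where √z denotes either square root of z and Δ_V′ is the derivative of the entire function z ↦ Δ_V(z). -/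
open MeasureTheory

/-- `y` is a solution of `-y'' + V y = z y` on `ℝ`, with derivative `yd`:
`y` is continuously differentiable and `yd x = yd 0 + ∫₀ˣ (V t - z) y t dt`. -/
def IsSolution (V : ℝ → ℝ) (z : ℂ) (y yd : ℝ → ℂ) : Prop :=
  (∀ x : ℝ, HasDerivAt y (yd x) x) ∧ Continuous yd ∧
    ∀ x : ℝ, yd x = yd 0 + ∫ t in (0:ℝ)..x, ((V t : ℂ) - z) * y t

/-- `Δ` is the discriminant of the `T`-periodic potential `V`:
`Δ z = y_N(z,T) + y_D'(z,T)` where `y_N`, `y_D` are the Neumann and Dirichlet solutions. -/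
def IsDiscriminant (T : ℝ) (V : ℝ → ℝ) (Δ : ℂ → ℂ) : Prop :=
  ∀ z : ℂ, ∃ yN yNd yD yDd : ℝ → ℂ,
    IsSolution V z yN yNd ∧ IsSolution V z yD yDd ∧
    yN 0 = 1 ∧ yNd 0 = 0 ∧ yD 0 = 0 ∧ yDd 0 = 1 ∧
    Δ z = yN T + yDd T

/-- The Besicovitch norm of a `T`-periodic potential: `((1/T) ∫₀ᵀ |W|²)^{1/2}`. -/
noncomputable def besNorm (T : ℝ) (W : ℝ → ℝ) : ℝ :=
  Real.sqrt ((1 / T) * ∫ t in (0:ℝ)..T, (W t) ^ 2)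

/-!
Write `z = μ²`. The growth bound controls `Δ` on the unit circle around `z`, and `ν ↦ Δ (ν²)` on
the unit circle around `μ`, where `|Im ν| ≤ |Im μ| + 1`. Cauchy's estimate for the derivative on
these circles gives `|Δ'(z)| ≲ e^{C₀ Q}` when `|z| ≤ 1`, and, by the chain rule
`(Δ ∘ sq)'(μ) = 2μ Δ'(z)`, `|Δ'(z)| ≲ e^{C₀ Q + π |Im μ|} / |μ|` when `|z| ≥ 1`.
-/

open Complex Metric

lemma Complex.cpow_one_half_sq (z : ℂ) : (z ^ ((1:ℂ) / 2)) ^ 2 = z := by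
  simp [one_div]

lemma Complex.norm_cpow_one_half (z : ℂ) : ‖z ^ ((1:ℂ) / 2)‖ = √‖z‖ := by
  rw [show ((1:ℂ) / 2) = ((1 / 2 : ℝ) : ℂ) by norm_num, norm_cpow_real, Real.sqrt_eq_rpow]

lemma Complex.norm_deriv_le_of_forall_mem_sphere_one_norm_le {f : ℂ → ℂ}
    (hf : Differentiable ℂ f) {c : ℂ} {M : ℝ} (h : ∀ w ∈ sphere c 1, ‖f w‖ ≤ M) :
    ‖deriv f c‖ ≤ M := by
  simpa using norm_deriv_le_of_forall_mem_sphere_norm_le one_pos hf.diffContOnCl h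

section GrowthInSqrt

variable {f : ℂ → ℂ} {A b : ℝ} (hf : Differentiable ℂ f) (hb : 0 ≤ b)
  (hgrowth : ∀ μ : ℂ, ‖f (μ ^ 2)‖ ≤ A * Real.exp (b * |μ.im|))

include hgrowth in
lemma nonneg_of_growth : 0 ≤ A := by
  simpa using (norm_nonneg _).trans (hgrowth 0)

include hf hb hgrowth

lemma norm_deriv_le_of_growth_of_norm_le_one {z : ℂ} (hz : ‖z‖ ≤ 1) :
    ‖deriv f z‖ ≤ A * Real.exp (2 * b) := by
  refine norm_deriv_le_of_forall_mem_sphere_one_norm_le hf fun w hw => ?_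
  set ν := w ^ ((1:ℂ) / 2)
  have hw2 : ‖ν‖ ^ 2 ≤ 2 := by
    rw [← norm_pow, cpow_one_half_sq]
    linarith [norm_le_norm_add_norm_sub' w z, mem_sphere_iff_norm.mp hw]
  have hν : |ν.im| ≤ 2 := (abs_im_le_norm ν).trans (by nlinarith [norm_nonneg ν])
  calc ‖f w‖ = ‖f (ν ^ 2)‖ := by rw [cpow_one_half_sq]
    _ ≤ A * Real.exp (b * |ν.im|) := hgrowth ν
    _ ≤ A * Real.exp (2 * b) := by
      gcongr ?_ * Real.exp ?_
      · exact nonneg_of_growth hgrowth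
      · nlinarith

lemma norm_deriv_sq_mul_two_norm_le_of_growth (μ : ℂ) :
    ‖deriv f (μ ^ 2)‖ * (2 * ‖μ‖) ≤ A * Real.exp (b * (|μ.im| + 1)) := by
  have hsq : HasDerivAt (fun ν : ℂ => ν ^ 2) (2 * μ) μ := by simpa using hasDerivAt_pow 2 μ
  have hchain : deriv (f ∘ fun ν => ν ^ 2) μ = deriv f (μ ^ 2) * (2 * μ) :=
    ((hf _).hasDerivAt.comp μ hsq).deriv
  have hcauchy : ‖deriv (f ∘ fun ν => ν ^ 2) μ‖ ≤ A * Real.exp (b * (|μ.im| + 1)) := by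
    refine norm_deriv_le_of_forall_mem_sphere_one_norm_le (hf.comp (differentiable_pow 2))
      fun ν hν => (hgrowth ν).trans ?_
    have him : |ν.im| ≤ |μ.im| + 1 := by
      have := abs_im_le_norm (ν - μ)
      rw [mem_sphere_iff_norm.mp hν, sub_im] at this
      linarith [abs_sub_abs_le_abs_sub ν.im μ.im]
    have := nonneg_of_growth hgrowth
    gcongr
  rwa [hchain, norm_mul, norm_mul, Complex.norm_two] at hcauchy

lemma norm_deriv_sq_le_of_growth (μ : ℂ) :
    ‖deriv f (μ ^ 2)‖ ≤ 2 * A * Real.exp (2 * b) / (1 + ‖μ‖) * Real.exp (b * |μ.im|) := by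
  have hA := nonneg_of_growth hgrowth
  rcases le_or_gt ‖μ‖ 1 with hμ | hμ
  · have hμ2 : ‖μ ^ 2‖ ≤ 1 := by rw [norm_pow]; nlinarith [norm_nonneg μ]
    calc ‖deriv f (μ ^ 2)‖ ≤ A * Real.exp (2 * b) :=
          norm_deriv_le_of_growth_of_norm_le_one hf hb hgrowth hμ2
      _ = 2 * A * Real.exp (2 * b) / 2 * 1 := by ring
      _ ≤ 2 * A * Real.exp (2 * b) / (1 + ‖μ‖) * Real.exp (b * |μ.im|) := by
          gcongr
          · linarith
          · exact Real.one_le_exp (by positivity)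
  · rw [div_mul_eq_mul_div, le_div_iff₀ (by positivity)]
    calc ‖deriv f (μ ^ 2)‖ * (1 + ‖μ‖) ≤ ‖deriv f (μ ^ 2)‖ * (2 * ‖μ‖) := by
          gcongr; linarith
      _ ≤ A * Real.exp (b * (|μ.im| + 1)) := norm_deriv_sq_mul_two_norm_le_of_growth hf hb hgrowth μ
      _ = A * Real.exp b * Real.exp (b * |μ.im|) := by
          rw [mul_assoc, ← Real.exp_add]; ring_nf
      _ ≤ 2 * A * Real.exp (2 * b) * Real.exp (b * |μ.im|) := by
          gcongr <;> linarith

end GrowthInSqrt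

/-- (Case `T = π`.) Suppose the discriminant `Δ` of a `π`-periodic
locally square-integrable potential `V` with `Q = ‖V‖_B` satisfies
`|Δ(μ²)| ≤ C₀ exp(C₀ Q^{1/2} + π |Im μ|)` for all `μ ∈ ℂ`, where `C₀ ≥ 1`. Then there
is `C > 0` depending only on `C₀` such that
`|Δ'(z)| ≤ (C/(1 + |z|^{1/2})) exp(C Q^{1/2} + π |Im √z|)` for all `z ∈ ℂ`. -/
theorem discriminant_deriv_bound_from_growth (C₀ : ℝ) (hC₀ : 1 ≤ C₀) :
    ∃ C : ℝ, 0 < C ∧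
      ∀ (V : ℝ → ℝ) (Δ : ℂ → ℂ),
        Function.Periodic V Real.pi →
        LocallyIntegrable (fun t => (V t) ^ 2) volume →
        IsDiscriminant Real.pi V Δ → Differentiable ℂ Δ →
        (∀ μ : ℂ, ‖Δ (μ ^ 2)‖ ≤
          C₀ * Real.exp (C₀ * Real.sqrt (besNorm Real.pi V) + Real.pi * |μ.im|)) →
        ∀ z : ℂ, ‖deriv Δ z‖ ≤
          C / (1 + Real.sqrt ‖z‖) *
            Real.exp (C * Real.sqrt (besNorm Real.pi V) +
              Real.pi * |(z ^ ((1:ℂ)/2)).im|) := by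
  refine ⟨2 * C₀ * Real.exp (2 * Real.pi), by positivity, ?_⟩
  intro V Δ _ _ _ hΔ hgrowth z
  set C := 2 * C₀ * Real.exp (2 * Real.pi)
  set Q := Real.sqrt (besNorm Real.pi V)
  set μ := z ^ ((1:ℂ) / 2)
  have hgrowth' (ν : ℂ) :
      ‖Δ (ν ^ 2)‖ ≤ C₀ * Real.exp (C₀ * Q) * Real.exp (Real.pi * |ν.im|) := by
    rw [mul_assoc, ← Real.exp_add]; exact hgrowth ν
  have hC₀C : C₀ ≤ C := by nlinarith [Real.one_le_exp (by positivity : 0 ≤ 2 * Real.pi)]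
  calc ‖deriv Δ z‖ = ‖deriv Δ (μ ^ 2)‖ := by rw [cpow_one_half_sq]
    _ ≤ 2 * (C₀ * Real.exp (C₀ * Q)) * Real.exp (2 * Real.pi) / (1 + ‖μ‖) *
          Real.exp (Real.pi * |μ.im|) :=
        norm_deriv_sq_le_of_growth hΔ Real.pi_pos.le hgrowth' μ
    _ = C / (1 + Real.sqrt ‖z‖) * (Real.exp (C₀ * Q) * Real.exp (Real.pi * |μ.im|)) := by
        rw [norm_cpow_one_half]; ring
    _ ≤ C / (1 + Real.sqrt ‖z‖) * Real.exp (C * Q + Real.pi * |μ.im|) := by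
        rw [Real.exp_add]; gcongr
end
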